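/- arXiv:0711.0013 — 4 statements merged into one kernel-verified Lean document; each statement's English description precedes it below -/
import Mathlib

section
/- Equality in the sharp Sobolev inequality for coherent states (Theorem 3.2, equality part): Let k > 1/2 and q ≥ 2 be real numbers with kq > 2, set p = q + 1/k, and let f(ζ) = A(1−|ζ|²)^k with A > 0. Then all the integrals below are finite and equality holds: ∫_D |f|^q dν_k + (4/(kq(kq−2))) · ((2k−1)/(4π)) ∫_D |∇(|f|^{q/2})|² dA = ((2k−1)/(kq−1)) · ((kp−1)/(2k−1))^{q/p} · ((kq−1)/(kq−2)) · (∫_D |f|^p dν_k)^{q/p}. -/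
/-!
For the coherent state `f = A(1−|ζ|²)^k` one has `|f|^s = A^s(1−|ζ|²)^{ks}` on the disc, so
every quantity in the inequality is a radial integral of a power of `1−|ζ|²`, and polar
coordinates reduce it to `∫₀¹ y(1−y²)^a dy = 1/(2(a+1))`. This gives
`∫|f|^s dν_k = A^s(2k−1)/(ks−1)` and, from `|∇(1−|ζ|²)^b|² = 4b²(1−|ζ|²)^{2b−2}|ζ|²` and
`|ζ|² = 1 − (1−|ζ|²)`, the energy `∫_D |∇|f|^{q/2}|² dA = A^q·kqπ/(kq−1)`. Both sides then
equal `A^q(2k−1)/(kq−2)`: on the right, `p = q + 1/k` makes `kp − 1 = kq`, and the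
`ν_k`-integral of `|f|^p` cancels against `((kp−1)/(2k−1))^{q/p}`.
-/

open MeasureTheory Metric

/-- The measure `ν_k` on the unit disc `D ⊆ ℂ`, with density
`((2k−1)/π)(1−|ζ|²)^{−2}` with respect to Lebesgue measure. -/
noncomputable def nuMeasure (k : ℝ) : Measure ℂ :=
  (volume.restrict (ball (0 : ℂ) 1)).withDensity
    (fun ζ => ENNReal.ofReal ((2 * k - 1) / Real.pi * ((1 - ‖ζ‖ ^ 2) ^ 2)⁻¹))

lemma integral_mul_one_sub_sq_rpow {a : ℝ} (ha : 0 ≤ a) :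
    ∫ y in (0 : ℝ)..1, y * (1 - y ^ 2) ^ a = 1 / (2 * (a + 1)) := by
  have hderiv : ∀ y ∈ Set.uIcc (0 : ℝ) 1,
      HasDerivAt (fun y : ℝ => -(1 - y ^ 2) ^ (a + 1) / (2 * (a + 1)))
        (y * (1 - y ^ 2) ^ a) y := by
    intro y _
    have hinner : HasDerivAt (fun y : ℝ => 1 - y ^ 2) (-(2 * y)) y := by
      simpa using (hasDerivAt_pow 2 y).const_sub 1
    have hpow := (Real.hasDerivAt_rpow_const (x := 1 - y ^ 2) (p := a + 1)
      (Or.inr (by linarith))).comp y hinner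
    refine (hpow.neg.div_const (2 * (a + 1))).congr_deriv ?_
    rw [add_sub_cancel_right]
    field_simp
  have hcont : Continuous fun y : ℝ => y * (1 - y ^ 2) ^ a := by
    have := Real.continuous_rpow_const ha
    fun_prop
  rw [intervalIntegral.integral_eq_sub_of_hasDerivAt hderiv (hcont.intervalIntegrable 0 1)]
  have : a + 1 ≠ 0 := by linarith
  norm_num [Real.zero_rpow this]
  field_simp

lemma integral_ball_fun_norm {r : ℝ} (hr : 0 ≤ r) (G : ℝ → ℝ) :
    ∫ z in ball (0 : ℂ) r, G ‖z‖ = 2 * Real.pi * ∫ y in (0 : ℝ)..r, y * G y := by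
  have hind : (ball (0 : ℂ) r).indicator (fun z => G ‖z‖)
      = fun z => (Set.Iio r).indicator G ‖z‖ := by
    ext z
    simp only [Set.indicator, mem_ball_zero_iff, Set.mem_Iio]
  rw [← integral_indicator measurableSet_ball, hind, integral_fun_norm_addHaar volume,
    Complex.finrank_real_complex, measureReal_def, Complex.volume_ball]
  have hrestrict : ∫ y in Set.Ioi (0 : ℝ), y ^ (2 - 1) • (Set.Iio r).indicator G y
      = ∫ y in (0 : ℝ)..r, y * G y := by
    have hsmul : (fun y : ℝ => y ^ (2 - 1) • (Set.Iio r).indicator G y)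
        = (Set.Iio r).indicator fun y => y * G y := by
      ext y
      simp [Set.indicator_apply]
    rw [hsmul, integral_indicator measurableSet_Iio, Measure.restrict_restrict measurableSet_Iio,
      Set.Iio_inter_Ioi, intervalIntegral.integral_of_le hr, integral_Ioc_eq_integral_Ioo]
  rw [hrestrict]
  simp only [ENNReal.ofReal_one, one_pow, one_mul, ENNReal.coe_toReal, NNReal.coe_real_pi,
    smul_eq_mul, nsmul_eq_mul, Nat.cast_ofNat]
  ring

lemma one_sub_norm_sq_pos {E : Type*} [SeminormedAddCommGroup E] {z : E} (hz : z ∈ ball 0 1) :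
    0 < 1 - ‖z‖ ^ 2 := by
  have := mem_ball_zero_iff.1 hz
  nlinarith [norm_nonneg z]

lemma integrableOn_ball_of_continuous {X : Type*} [MetricSpace X] [ProperSpace X]
    [MeasurableSpace X] [OpensMeasurableSpace X] {μ : Measure X} [IsFiniteMeasureOnCompacts μ]
    {g : X → ℝ} (hg : Continuous g) (x : X) (r : ℝ) : IntegrableOn g (ball x r) μ :=
  (hg.continuousOn.integrableOn_compact (isCompact_closedBall x r)).mono_set
    ball_subset_closedBall

lemma continuous_one_sub_norm_sq_rpow {a : ℝ} (ha : 0 ≤ a) :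
    Continuous fun z : ℂ => (1 - ‖z‖ ^ 2) ^ a :=
  (Real.continuous_rpow_const ha).comp (by fun_prop)

lemma integral_ball_one_sub_norm_sq_rpow {a : ℝ} (ha : 0 ≤ a) :
    ∫ z in ball (0 : ℂ) 1, (1 - ‖z‖ ^ 2) ^ a = Real.pi / (a + 1) := by
  rw [integral_ball_fun_norm zero_le_one (fun y => (1 - y ^ 2) ^ a),
    integral_mul_one_sub_sq_rpow ha]
  field_simp

lemma integral_ball_one_sub_norm_sq_rpow_mul_norm_sq {a : ℝ} (ha : 0 ≤ a) :
    ∫ z in ball (0 : ℂ) 1, (1 - ‖z‖ ^ 2) ^ a * ‖z‖ ^ 2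
      = Real.pi / ((a + 1) * (a + 2)) := by
  have hsplit : Set.EqOn (fun z : ℂ => (1 - ‖z‖ ^ 2) ^ a * ‖z‖ ^ 2)
      (fun z => (1 - ‖z‖ ^ 2) ^ a - (1 - ‖z‖ ^ 2) ^ (a + 1)) (ball 0 1) := by
    intro z hz
    simp only
    rw [Real.rpow_add_one' (one_sub_norm_sq_pos hz).le (by linarith)]
    ring
  have hint := fun b (hb : 0 ≤ b) =>
    integrableOn_ball_of_continuous (μ := volume) (continuous_one_sub_norm_sq_rpow hb) 0 1
  rw [setIntegral_congr_fun measurableSet_ball hsplit,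
    integral_sub (hint a ha) (hint (a + 1) (by linarith)),
    integral_ball_one_sub_norm_sq_rpow ha, integral_ball_one_sub_norm_sq_rpow (by linarith)]
  field_simp
  ring

noncomputable def nuDensity (k : ℝ) (ζ : ℂ) : ℝ :=
  (2 * k - 1) / Real.pi * ((1 - ‖ζ‖ ^ 2) ^ 2)⁻¹

lemma nuMeasure_eq_withDensity (k : ℝ) :
    nuMeasure k = (volume.restrict (ball 0 1)).withDensity fun ζ => .ofReal (nuDensity k ζ) :=
  rfl

lemma ae_nuMeasure_mem_ball (k : ℝ) : ∀ᵐ ζ ∂nuMeasure k, ζ ∈ ball (0 : ℂ) 1 :=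
  (withDensity_absolutelyContinuous _ _).ae_le (ae_restrict_mem measurableSet_ball)

lemma measurable_nuDensity (k : ℝ) : Measurable (nuDensity k) := by
  unfold nuDensity
  fun_prop

lemma nuDensity_nonneg {k : ℝ} (hk : 1 / 2 ≤ k) (ζ : ℂ) : 0 ≤ nuDensity k ζ := by
  have : 0 ≤ 2 * k - 1 := by linarith
  unfold nuDensity
  positivity

lemma integrable_nuMeasure_iff {k : ℝ} (hk : 1 / 2 ≤ k) {g : ℂ → ℝ} :
    Integrable g (nuMeasure k) ↔ IntegrableOn (fun ζ => nuDensity k ζ * g ζ) (ball 0 1) := by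
  rw [nuMeasure_eq_withDensity, integrable_withDensity_iff_integrable_smul'
    (measurable_nuDensity k).ennreal_ofReal (.of_forall fun _ => ENNReal.ofReal_lt_top)]
  simp only [ENNReal.toReal_ofReal (nuDensity_nonneg hk _), smul_eq_mul, IntegrableOn]

lemma integral_nuMeasure {k : ℝ} (hk : 1 / 2 ≤ k) (g : ℂ → ℝ) :
    ∫ ζ, g ζ ∂nuMeasure k = ∫ ζ in ball (0 : ℂ) 1, nuDensity k ζ * g ζ := by
  rw [nuMeasure_eq_withDensity, integral_withDensity_eq_integral_toReal_smul
    (measurable_nuDensity k).ennreal_ofReal (.of_forall fun _ => ENNReal.ofReal_lt_top)]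
  simp only [ENNReal.toReal_ofReal (nuDensity_nonneg hk _), smul_eq_mul]

lemma nuDensity_mul_one_sub_norm_sq_rpow (k b : ℝ) :
    Set.EqOn (fun ζ => nuDensity k ζ * (1 - ‖ζ‖ ^ 2) ^ b)
      (fun ζ => (2 * k - 1) / Real.pi * (1 - ‖ζ‖ ^ 2) ^ (b - 2)) (ball 0 1) := by
  intro ζ hζ
  simp only [nuDensity]
  rw [Real.rpow_sub (one_sub_norm_sq_pos hζ), Real.rpow_two]
  ring

lemma integrable_nuMeasure_one_sub_norm_sq_rpow {k b : ℝ} (hk : 1 / 2 ≤ k) (hb : 2 ≤ b) :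
    Integrable (fun ζ : ℂ => (1 - ‖ζ‖ ^ 2) ^ b) (nuMeasure k) := by
  rw [integrable_nuMeasure_iff hk]
  refine (integrableOn_ball_of_continuous ?_ 0 1).congr_fun
    (nuDensity_mul_one_sub_norm_sq_rpow k b).symm measurableSet_ball
  exact continuous_const.mul (continuous_one_sub_norm_sq_rpow (by linarith))

lemma integral_nuMeasure_one_sub_norm_sq_rpow {k b : ℝ} (hk : 1 / 2 ≤ k) (hb : 2 ≤ b) :
    ∫ ζ, (1 - ‖ζ‖ ^ 2) ^ b ∂nuMeasure k = (2 * k - 1) / (b - 1) := by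
  rw [integral_nuMeasure hk, setIntegral_congr_fun measurableSet_ball
    (nuDensity_mul_one_sub_norm_sq_rpow k b), integral_const_mul,
    integral_ball_one_sub_norm_sq_rpow (by linarith)]
  rw [show b - 2 + 1 = b - 1 by ring]
  field_simp

section Gradient

variable {E : Type*} [NormedAddCommGroup E] [InnerProductSpace ℝ E]

lemma hasFDerivAt_one_sub_norm_sq_rpow {z : E} (hz : z ∈ ball 0 1) (b : ℝ) :
    HasFDerivAt (fun w : E => (1 - ‖w‖ ^ 2) ^ b)
      ((-(2 * b * (1 - ‖z‖ ^ 2) ^ (b - 1))) • innerSL ℝ z) z := by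
  have hinner : HasFDerivAt (fun w : E => 1 - ‖w‖ ^ 2) (-(2 • innerSL ℝ z)) z :=
    (hasStrictFDerivAt_norm_sq z).hasFDerivAt.const_sub 1
  refine ((Real.hasDerivAt_rpow_const (Or.inl (one_sub_norm_sq_pos hz).ne')).comp_hasFDerivAt
    z hinner).congr_fderiv ?_
  ext w
  simp only [smul_apply, neg_apply, smul_eq_mul, two_smul, add_apply]
  ring

lemma norm_fderiv_one_sub_norm_sq_rpow_sq {z : E} (hz : z ∈ ball 0 1) (b : ℝ) :
    ‖fderiv ℝ (fun w : E => (1 - ‖w‖ ^ 2) ^ b) z‖ ^ 2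
      = 4 * b ^ 2 * ((1 - ‖z‖ ^ 2) ^ (2 * b - 2) * ‖z‖ ^ 2) := by
  have ht := one_sub_norm_sq_pos hz
  rw [(hasFDerivAt_one_sub_norm_sq_rpow hz b).fderiv, norm_smul, innerSL_apply_norm,
    Real.norm_eq_abs, mul_pow, sq_abs, show 2 * b - 2 = (b - 1) * (2 : ℕ) by push_cast; ring,
    Real.rpow_mul_natCast ht.le]
  ring

end Gradient

lemma integral_ball_norm_fderiv_one_sub_norm_sq_rpow_sq {b : ℝ} (hb : 1 ≤ b) :
    ∫ z in ball (0 : ℂ) 1, ‖fderiv ℝ (fun w : ℂ => (1 - ‖w‖ ^ 2) ^ b) z‖ ^ 2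
      = 2 * b * Real.pi / (2 * b - 1) := by
  rw [setIntegral_congr_fun measurableSet_ball
      (fun z hz => norm_fderiv_one_sub_norm_sq_rpow_sq hz b),
    integral_const_mul, integral_ball_one_sub_norm_sq_rpow_mul_norm_sq (by linarith),
    show 2 * b - 2 + 1 = 2 * b - 1 by ring, show 2 * b - 2 + 2 = 2 * b by ring]
  have : b ≠ 0 := by linarith
  field_simp
  ring

lemma integrableOn_ball_norm_fderiv_one_sub_norm_sq_rpow_sq {b : ℝ} (hb : 1 ≤ b) :
    IntegrableOn (fun z : ℂ => ‖fderiv ℝ (fun w : ℂ => (1 - ‖w‖ ^ 2) ^ b) z‖ ^ 2)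
      (ball 0 1) := by
  refine (integrableOn_ball_of_continuous ?_ 0 1).congr_fun
    (fun z hz => (norm_fderiv_one_sub_norm_sq_rpow_sq hz b).symm) measurableSet_ball
  have := continuous_one_sub_norm_sq_rpow (a := 2 * b - 2) (by linarith)
  fun_prop

noncomputable def coherentState (A k : ℝ) (ζ : ℂ) : ℝ := A * (1 - ‖ζ‖ ^ 2) ^ k

section CoherentState

variable {A k : ℝ}

lemma abs_coherentState_rpow (hA : 0 ≤ A) {z : ℂ} (hz : z ∈ ball 0 1) (s : ℝ) :
    |coherentState A k z| ^ s = A ^ s * (1 - ‖z‖ ^ 2) ^ (k * s) := by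
  have ht := (one_sub_norm_sq_pos hz).le
  rw [coherentState, abs_of_nonneg (by positivity), Real.mul_rpow hA (by positivity),
    ← Real.rpow_mul ht]

lemma abs_coherentState_rpow_ae_eq (hA : 0 ≤ A) (s : ℝ) :
    (fun ζ => |coherentState A k ζ| ^ s) =ᵐ[nuMeasure k]
      fun ζ => A ^ s * (1 - ‖ζ‖ ^ 2) ^ (k * s) := by
  filter_upwards [ae_nuMeasure_mem_ball k] with ζ hζ
  exact abs_coherentState_rpow hA hζ s

lemma integrable_nuMeasure_abs_coherentState_rpow (hk : 1 / 2 ≤ k) (hA : 0 ≤ A) {s : ℝ}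
    (hks : 2 ≤ k * s) : Integrable (fun ζ => |coherentState A k ζ| ^ s) (nuMeasure k) :=
  ((integrable_nuMeasure_one_sub_norm_sq_rpow hk hks).const_mul _).congr
    (abs_coherentState_rpow_ae_eq hA s).symm

lemma integral_nuMeasure_abs_coherentState_rpow (hk : 1 / 2 ≤ k) (hA : 0 ≤ A) {s : ℝ}
    (hks : 2 ≤ k * s) :
    ∫ ζ, |coherentState A k ζ| ^ s ∂nuMeasure k = A ^ s * ((2 * k - 1) / (k * s - 1)) := by
  rw [integral_congr_ae (abs_coherentState_rpow_ae_eq hA s), integral_const_mul,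
    integral_nuMeasure_one_sub_norm_sq_rpow hk hks]

lemma norm_fderiv_abs_coherentState_rpow_sq (hA : 0 ≤ A) {z : ℂ} (hz : z ∈ ball 0 1) (q : ℝ) :
    ‖fderiv ℝ (fun w => |coherentState A k w| ^ (q / 2)) z‖ ^ 2
      = A ^ q * ‖fderiv ℝ (fun w : ℂ => (1 - ‖w‖ ^ 2) ^ (k * (q / 2))) z‖ ^ 2 := by
  have hlocal : (fun w => |coherentState A k w| ^ (q / 2)) =ᶠ[nhds z]
      fun w => A ^ (q / 2) * (1 - ‖w‖ ^ 2) ^ (k * (q / 2)) := by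
    filter_upwards [isOpen_ball.mem_nhds hz] with w hw
    exact abs_coherentState_rpow hA hw _
  rw [hlocal.fderiv_eq, fderiv_const_mul
    (hasFDerivAt_one_sub_norm_sq_rpow hz _).differentiableAt, norm_smul, mul_pow,
    Real.norm_eq_abs, sq_abs, ← Real.rpow_mul_natCast hA]
  norm_num

lemma integrableOn_ball_norm_fderiv_abs_coherentState_rpow_sq (hA : 0 ≤ A) {q : ℝ}
    (hkq : 2 ≤ k * q) :
    IntegrableOn (fun z => ‖fderiv ℝ (fun w => |coherentState A k w| ^ (q / 2)) z‖ ^ 2)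
      (ball 0 1) :=
  IntegrableOn.congr_fun ((integrableOn_ball_norm_fderiv_one_sub_norm_sq_rpow_sq
    (b := k * (q / 2)) (by linarith)).const_mul _)
    (fun _ hz => (norm_fderiv_abs_coherentState_rpow_sq hA hz q).symm) measurableSet_ball

lemma integral_ball_norm_fderiv_abs_coherentState_rpow_sq (hA : 0 ≤ A) {q : ℝ}
    (hkq : 2 ≤ k * q) :
    ∫ z in ball (0 : ℂ) 1, ‖fderiv ℝ (fun w => |coherentState A k w| ^ (q / 2)) z‖ ^ 2
      = A ^ q * (k * q * Real.pi / (k * q - 1)) := by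
  rw [setIntegral_congr_fun measurableSet_ball
    (fun _ hz => norm_fderiv_abs_coherentState_rpow_sq hA hz q), integral_const_mul,
    integral_ball_norm_fderiv_one_sub_norm_sq_rpow_sq (by linarith),
    show 2 * (k * (q / 2)) = k * q by ring]

end CoherentState

theorem sharp_sobolev_equality_for_coherent_states_general
    (k q A p : ℝ) (hk : 1 / 2 < k) (hkq : 2 < k * q) (hA : 0 < A)
    (hp : p = q + 1 / k)
    (f : ℂ → ℝ) (hf : ∀ ζ, f ζ = A * (1 - ‖ζ‖ ^ 2) ^ k) :
    Integrable (fun ζ => |f ζ| ^ q) (nuMeasure k) ∧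
    Integrable (fun ζ => ‖fderiv ℝ (fun z => |f z| ^ (q / 2)) ζ‖ ^ 2)
      (volume.restrict (ball (0 : ℂ) 1)) ∧
    Integrable (fun ζ => |f ζ| ^ p) (nuMeasure k) ∧
    (∫ ζ, |f ζ| ^ q ∂(nuMeasure k))
        + 4 / (k * q * (k * q - 2)) * ((2 * k - 1) / (4 * Real.pi)) *
            ∫ ζ in ball (0 : ℂ) 1, ‖fderiv ℝ (fun z => |f z| ^ (q / 2)) ζ‖ ^ 2
      = (2 * k - 1) / (k * q - 1) * ((k * p - 1) / (2 * k - 1)) ^ (q / p)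
          * ((k * q - 1) / (k * q - 2))
          * (∫ ζ, |f ζ| ^ p ∂(nuMeasure k)) ^ (q / p) := by
  obtain rfl : f = coherentState A k := funext hf
  have hk0 : 0 < k := by linarith
  have hq0 : 0 < q := pos_of_mul_pos_right (by linarith) hk0.le
  have hkp : k * p = k * q + 1 := by
    rw [hp, mul_add, mul_one_div_cancel hk0.ne']
  have hp0 : p ≠ 0 := by
    rw [hp]
    positivity
  refine ⟨integrable_nuMeasure_abs_coherentState_rpow hk.le hA.le hkq.le,
    integrableOn_ball_norm_fderiv_abs_coherentState_rpow_sq hA.le hkq.le,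
    integrable_nuMeasure_abs_coherentState_rpow hk.le hA.le (by linarith), ?_⟩
  rw [integral_nuMeasure_abs_coherentState_rpow hk.le hA.le hkq.le,
    integral_nuMeasure_abs_coherentState_rpow hk.le hA.le (by linarith),
    integral_ball_norm_fderiv_abs_coherentState_rpow_sq hA.le hkq.le, hkp, add_sub_cancel_right]
  have hscale : (k * q / (2 * k - 1)) ^ (q / p) * (A ^ p * ((2 * k - 1) / (k * q))) ^ (q / p)
      = A ^ q := by
    have h2k : 0 < 2 * k - 1 := by linarith
    have hkq0 : 0 < k * q := by linarith
    rw [← Real.mul_rpow (by positivity) (by positivity),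
      show k * q / (2 * k - 1) * (A ^ p * ((2 * k - 1) / (k * q))) = A ^ p by
        rw [mul_left_comm, div_mul_div_comm, mul_comm (k * q),
          div_self (mul_ne_zero h2k.ne' hkq0.ne'), mul_one],
      ← Real.rpow_mul hA.le, mul_div_cancel₀ q hp0]
  rw [show ∀ a b c d : ℝ, a * b * c * d = a * c * (b * d) by intros; ring, hscale]
  have : k * q - 1 ≠ 0 := by linarith
  have : k * q - 2 ≠ 0 := by linarith
  field_simp
  ring

/-- Equality in the sharp Sobolev inequality for coherent states
(Theorem 3.2, equality part): for `f(ζ) = A(1−|ζ|²)^k` with `A > 0` all the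
relevant integrals are finite, and equality holds in the sharp Sobolev inequality. -/
theorem sharp_sobolev_equality_for_coherent_states
    (k q A p : ℝ) (hk : 1 / 2 < k) (hq : 2 ≤ q) (hkq : 2 < k * q) (hA : 0 < A)
    (hp : p = q + 1 / k)
    (f : ℂ → ℝ) (hf : ∀ ζ, f ζ = A * (1 - ‖ζ‖ ^ 2) ^ k) :
    Integrable (fun ζ => |f ζ| ^ q) (nuMeasure k) ∧
    Integrable (fun ζ => ‖fderiv ℝ (fun z => |f z| ^ (q / 2)) ζ‖ ^ 2)
      (volume.restrict (ball (0 : ℂ) 1)) ∧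
    Integrable (fun ζ => |f ζ| ^ p) (nuMeasure k) ∧
    (∫ ζ, |f ζ| ^ q ∂(nuMeasure k))
        + 4 / (k * q * (k * q - 2)) * ((2 * k - 1) / (4 * Real.pi)) *
            ∫ ζ in ball (0 : ℂ) 1, ‖fderiv ℝ (fun z => |f z| ^ (q / 2)) ζ‖ ^ 2
      = (2 * k - 1) / (k * q - 1) * ((k * p - 1) / (2 * k - 1)) ^ (q / p)
          * ((k * q - 1) / (k * q - 2))
          * (∫ ζ, |f ζ| ^ p ∂(nuMeasure k)) ^ (q / p) :=
  sharp_sobolev_equality_for_coherent_states_general k q A p hk hkq hA hp f hf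
end

section
/- Improvement over the Euclidean entropy–energy constant (part of Theorem 4.1, Φ* < Φ_{ℝ²}): For every real k > 1, with x₀ = k(k−1)/(2k+1), one has C_{x₀} > C_k, i.e. ln(k(k−1)/(2k+1)) − ln(π) − 2 > 2k·ln((k−1)/k) + ln((k−1)/(2π)). -/
/-! Expanding the logarithms, the claim becomes
`2 + log (1 + 1/(2k)) < 2k · log (1 + 1/(k-1))`. The left side is at most `2 + 1/(2k)` by
`log (1 + y) ≤ y`, while the Padé-type bound `log (1 + y) > 2y/(y+2)` at `y = 1/(k-1)` makes the
right side exceed `4k/(2k-1) = 2 + 2/(2k-1)`. -/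

open Real

lemma two_div_two_mul_add_one_lt_log_add_one_sub_log {x : ℝ} (hx : 0 < x) :
    2 / (2 * x + 1) < log (x + 1) - log x := by
  have h := lt_log_one_add_of_pos (one_div_pos.mpr hx)
  have hlhs : 2 * (1 / x) / (1 / x + 2) = 2 / (2 * x + 1) := by
    rw [show 1 / x + 2 = (2 * x + 1) / x by field_simp; ring]
    field_simp
  rwa [hlhs, one_add_div hx.ne', log_div (by positivity) hx.ne'] at h

lemma log_add_one_sub_log_le_one_div {x : ℝ} (hx : 0 < x) :
    log (x + 1) - log x ≤ 1 / x := by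
  have h := log_le_sub_one_of_pos (x := (x + 1) / x) (by positivity)
  rwa [log_div (by positivity) hx.ne', add_div, div_self hx.ne', add_sub_cancel_left] at h

/-- Improvement over the Euclidean entropy–energy constant (part of Theorem 4.1,
`Φ* < Φ_{ℝ²}`): for every real `k > 1`, with `x₀ = k(k−1)/(2k+1)`, one has
`C_{x₀} > C_k`, i.e.
`ln(k(k−1)/(2k+1)) − ln(π) − 2 > 2k·ln((k−1)/k) + ln((k−1)/(2π))`. -/
theorem improvement_over_euclidean_constant (k : ℝ) (hk : 1 < k) :
    2 * k * Real.log ((k - 1) / k) + Real.log ((k - 1) / (2 * Real.pi))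
      < Real.log (k * (k - 1) / (2 * k + 1)) - Real.log Real.pi - 2 := by
  have hk0 : 0 < k := by linarith
  have hk1 : 0 < k - 1 := by linarith
  have hlower := two_div_two_mul_add_one_lt_log_add_one_sub_log hk1
  rw [sub_add_cancel, show 2 * (k - 1) + 1 = 2 * k - 1 by ring] at hlower
  have hupper := log_add_one_sub_log_le_one_div (show 0 < 2 * k by positivity)
  rw [log_mul two_ne_zero hk0.ne'] at hupper
  have hgap : 2 + 1 / (2 * k) < 2 * k * (2 / (2 * k - 1)) := by
    have hk2 : 0 < 2 * k - 1 := by linarith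
    rw [← sub_pos]
    field_simp
    nlinarith
  have hmul : 2 * k * (2 / (2 * k - 1)) < 2 * k * (log k - log (k - 1)) :=
    mul_lt_mul_of_pos_left hlower (by positivity)
  rw [log_div hk1.ne' hk0.ne', log_div hk1.ne' (by positivity),
    log_div (by positivity) (by linarith), log_mul hk0.ne' hk1.ne', log_mul two_ne_zero pi_pos.ne']
  linarith
end

section
/- Monotonicity of the auxiliary function θ and uniqueness of the zero of the comparison function (Lemma 5.8): Let α ∈ G ∪ N and let u be the corresponding solution. Then θ(τ) = −sinh(τ)·u'(τ)/u(τ) is non-decreasing on (0, b(α)), and consequently for every β > 0 the function v_β(τ) = sinh(τ)·u'(τ) + β·u(τ) has exactly one zero in (0, b(α)). -/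
/-!
Along a solution `(sinh τ · u')' = -sinh τ · f(u)`, hence
`θ' = sinh τ · (u'² + u f(u)) / u²`. With the potential `G' = f`, `G(0) = 0`, the energy
`E = u'²/2 + G(u)` satisfies `E' = -coth τ · u'² ≤ 0`, and `E ≥ 0` before `b(α)`: at a zero
`E = u'²/2`, and in the ground-state case `E(τ) ≥ G(u(t)) → 0`. Since
`s f(s) - 2 G(s) = ã s^{2+2/m} / (m+1) > 0`, we get `u'² + u f(u) = 2E + (u f(u) - 2G(u)) > 0`,
so `θ` is strictly increasing.

The zeros of `v_β` are the points where `θ = β`. As `θ → 0` at `0⁺`, it remains to see that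
`θ` is unbounded above. Near a zero `b(α)`, a bound `θ ≤ β` makes `u e^{Kτ}` non-decreasing,
contradicting `u(b(α)) = 0`; at infinity it gives `u'² + u f(u) ≤ u² (θ²/sinh² τ - b̃/2) < 0`
for large `τ`.
-/

open Set Filter Topology

section

open Real

structure IsRadialSolution (F u : ℝ → ℝ) : Prop where
  differentiableAt : ∀ τ ∈ Ioi (0 : ℝ), DifferentiableAt ℝ u τ
  differentiableAt_deriv : ∀ τ ∈ Ioi (0 : ℝ), DifferentiableAt ℝ (deriv u) τ
  ode : ∀ τ ∈ Ioi (0 : ℝ), deriv (deriv u) τ + (cosh τ / sinh τ) * deriv u τ + F (u τ) = 0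

noncomputable def theta (u : ℝ → ℝ) (τ : ℝ) : ℝ := -(sinh τ * deriv u τ) / u τ

noncomputable def energy (G u : ℝ → ℝ) (τ : ℝ) : ℝ := deriv u τ ^ 2 / 2 + G (u τ)

namespace IsRadialSolution

variable {F u : ℝ → ℝ} (hsol : IsRadialSolution F u)
include hsol

theorem hasDerivAt_sinh_mul_deriv {τ : ℝ} (hτ : 0 < τ) :
    HasDerivAt (fun t => sinh t * deriv u t) (-(sinh τ * F (u τ))) τ := by
  have hs : sinh τ ≠ 0 := (sinh_pos_iff.2 hτ).ne'
  refine ((hasDerivAt_sinh τ).mul (hsol.differentiableAt_deriv τ hτ).hasDerivAt).congr_deriv ?_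
  have := hsol.ode τ hτ
  field_simp at this
  linear_combination this

theorem hasDerivAt_theta {τ : ℝ} (hτ : 0 < τ) (hu : 0 < u τ) :
    HasDerivAt (theta u) (sinh τ * (deriv u τ ^ 2 + u τ * F (u τ)) / u τ ^ 2) τ := by
  refine ((hsol.hasDerivAt_sinh_mul_deriv hτ).neg.div (hsol.differentiableAt τ hτ).hasDerivAt
    hu.ne').congr_deriv ?_
  simp only [Pi.neg_apply]
  ring

theorem continuousOn_theta {S : Set ℝ} (hS : S ⊆ Ioi 0) (hu : ∀ τ ∈ S, 0 < u τ) :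
    ContinuousOn (theta u) S := fun τ hτ =>
  (hsol.hasDerivAt_theta (hS hτ) (hu τ hτ)).continuousAt.continuousWithinAt

theorem strictMonoOn_theta {S : Set ℝ} (hSo : IsOpen S) (hSc : Convex ℝ S) (hS : S ⊆ Ioi 0)
    (hu : ∀ τ ∈ S, 0 < u τ) (hE : ∀ τ ∈ S, 0 < deriv u τ ^ 2 + u τ * F (u τ)) :
    StrictMonoOn (theta u) S := by
  refine strictMonoOn_of_hasDerivWithinAt_pos hSc (hsol.continuousOn_theta hS hu)
    (f' := fun τ => sinh τ * (deriv u τ ^ 2 + u τ * F (u τ)) / u τ ^ 2) ?_ ?_ <;>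
    rw [hSo.interior_eq]
  · exact fun τ hτ => (hsol.hasDerivAt_theta (hS hτ) (hu τ hτ)).hasDerivWithinAt
  · intro τ hτ
    have := sinh_pos_iff.2 (hS hτ)
    have := hE τ hτ
    have := hu τ hτ
    positivity

variable {G : ℝ → ℝ} (hG : ∀ s, HasDerivAt G (F s) s)
include hG

theorem hasDerivAt_energy {τ : ℝ} (hτ : 0 < τ) :
    HasDerivAt (energy G u) (-(cosh τ / sinh τ) * deriv u τ ^ 2) τ := by
  refine ((((hsol.differentiableAt_deriv τ hτ).hasDerivAt.pow 2).div_const 2).add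
    ((hG (u τ)).comp τ (hsol.differentiableAt τ hτ).hasDerivAt)).congr_deriv ?_
  linear_combination deriv u τ * hsol.ode τ hτ

theorem antitoneOn_energy : AntitoneOn (energy G u) (Ioi 0) := by
  have hderiv := fun τ (hτ : τ ∈ Ioi (0 : ℝ)) => hsol.hasDerivAt_energy hG hτ
  refine antitoneOn_of_hasDerivWithinAt_nonpos (convex_Ioi 0)
    (fun τ hτ => (hderiv τ hτ).continuousAt.continuousWithinAt)
    (f' := fun τ => -(cosh τ / sinh τ) * deriv u τ ^ 2) ?_ ?_ <;> rw [interior_Ioi]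
  · exact fun τ hτ => (hderiv τ hτ).hasDerivWithinAt
  · intro τ hτ
    have := sinh_pos_iff.2 hτ
    have := cosh_pos τ
    have : 0 ≤ cosh τ / sinh τ * deriv u τ ^ 2 := by positivity
    linarith

theorem energy_nonneg_of_eq_zero (hG0 : G 0 = 0) {b : ℝ} (hb : 0 < b) (hub : u b = 0) :
    ∀ τ ∈ Ioo 0 b, 0 ≤ energy G u τ := fun τ hτ =>
  calc 0 ≤ deriv u b ^ 2 / 2 := by positivity
    _ = energy G u b := by simp [energy, hub, hG0]
    _ ≤ energy G u τ := hsol.antitoneOn_energy hG hτ.1 hb hτ.2.le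

theorem energy_nonneg_of_tendsto_zero (hG0 : G 0 = 0) (hlim : Tendsto u atTop (𝓝 0)) :
    ∀ τ ∈ Ioi 0, 0 ≤ energy G u τ := by
  intro τ hτ
  have hGu : Tendsto (G ∘ u) atTop (𝓝 0) := hG0 ▸ (hG 0).continuousAt.tendsto.comp hlim
  refine le_of_tendsto hGu ?_
  filter_upwards [eventually_ge_atTop τ] with t ht
  calc G (u t) ≤ energy G u t := le_add_of_nonneg_left (by positivity)
    _ ≤ energy G u τ := hsol.antitoneOn_energy hG hτ (lt_of_lt_of_le hτ ht) ht

end IsRadialSolution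

theorem deriv_sq_add_mul_pos_of_energy_nonneg {F G u : ℝ → ℝ}
    (hFG : ∀ s > 0, 2 * G s < s * F s) {τ : ℝ} (hu : 0 < u τ) (hE : 0 ≤ energy G u τ) :
    0 < deriv u τ ^ 2 + u τ * F (u τ) := by
  unfold energy at hE
  linarith [hFG (u τ) hu]

theorem tendsto_theta_nhdsGT_zero {u : ℝ → ℝ} (hu : ContinuousWithinAt u (Ioi 0) 0)
    (hu0 : u 0 ≠ 0) (hu' : Tendsto (deriv u) (𝓝[>] 0) (𝓝 0)) :
    Tendsto (theta u) (𝓝[>] 0) (𝓝 0) := by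
  have hs : Tendsto sinh (𝓝[>] 0) (𝓝 0) := by
    simpa using continuous_sinh.continuousWithinAt.tendsto (s := Ioi 0) (x := 0)
  have h := ((hs.mul hu').neg).div hu hu0
  rwa [zero_mul, neg_zero, zero_div] at h

theorem monotoneOn_mul_exp_of_deriv_add_mul_nonneg {u : ℝ → ℝ} {K x y : ℝ}
    (hu : ∀ t ∈ Icc x y, DifferentiableAt ℝ u t) (h : ∀ t ∈ Ioo x y, 0 ≤ deriv u t + K * u t) :
    MonotoneOn (fun t => u t * exp (K * t)) (Icc x y) := by
  have hderiv : ∀ t ∈ Icc x y, HasDerivAt (fun t => u t * exp (K * t))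
      ((deriv u t + K * u t) * exp (K * t)) t := fun t ht => by
    refine ((hu t ht).hasDerivAt.mul (((hasDerivAt_id t).const_mul K).exp)).congr_deriv ?_
    simp only [id]
    ring
  refine monotoneOn_of_hasDerivWithinAt_nonneg (convex_Icc x y)
    (fun t ht => (hderiv t ht).continuousAt.continuousWithinAt)
    (f' := fun t => (deriv u t + K * u t) * exp (K * t)) ?_ ?_ <;> rw [interior_Icc]
  · exact fun t ht => (hderiv t (Ioo_subset_Icc_self ht)).hasDerivWithinAt
  · exact fun t ht => mul_nonneg (h t ht) (exp_pos _).le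

theorem not_bddAbove_theta_of_eq_zero {u : ℝ → ℝ}
    (hud : ∀ τ ∈ Ioi (0 : ℝ), DifferentiableAt ℝ u τ) {b : ℝ} (hb : 0 < b) (hub : u b = 0)
    (hpos : ∀ τ ∈ Ioo 0 b, 0 < u τ) : ¬ BddAbove (theta u '' Ioo 0 b) := by
  rintro ⟨β, hβ⟩
  have hτ₀ : b / 2 ∈ Ioo 0 b := ⟨by positivity, by linarith⟩
  have hs₀ := sinh_pos_iff.2 hτ₀.1
  set K := max β 0 / sinh (b / 2)
  have hK : ∀ t ∈ Ioo (b / 2) b, 0 ≤ deriv u t + K * u t := by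
    intro t ht
    have ht0 : t ∈ Ioo 0 b := ⟨hτ₀.1.trans ht.1, ht.2⟩
    have hut := hpos t ht0
    have hst := sinh_pos_iff.2 ht0.1
    have hθ : theta u t ≤ max β 0 := (hβ (mem_image_of_mem _ ht0)).trans (le_max_left _ _)
    rw [theta, div_le_iff₀ hut] at hθ
    have : -deriv u t ≤ K * u t :=
      calc -deriv u t ≤ max β 0 * u t / sinh t := by
            rw [le_div_iff₀ hst]
            linarith
        _ ≤ max β 0 * u t / sinh (b / 2) :=
            div_le_div_of_nonneg_left (by positivity) hs₀ (sinh_le_sinh.2 ht.1.le)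
        _ = K * u t := by ring
    linarith
  have hmono := monotoneOn_mul_exp_of_deriv_add_mul_nonneg
    (fun t ht => hud t (hτ₀.1.trans_le ht.1)) hK
  have hle := hmono (left_mem_Icc.2 hτ₀.2.le) (right_mem_Icc.2 hτ₀.2.le) hτ₀.2.le
  simp only [hub, zero_mul] at hle
  nlinarith [hpos _ hτ₀, exp_pos (K * (b / 2))]

theorem not_bddAbove_theta_of_tendsto_zero {F u : ℝ → ℝ} {c : ℝ} (hc : 0 < c)
    (hFc : ∀ᶠ s in 𝓝[>] 0, F s ≤ -c * s) (hpos : ∀ τ ∈ Ioi 0, 0 < u τ)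
    (hlim : Tendsto u atTop (𝓝 0)) (hmono : MonotoneOn (theta u) (Ioi 0))
    (hE : ∀ τ ∈ Ioi 0, 0 < deriv u τ ^ 2 + u τ * F (u τ)) :
    ¬ BddAbove (theta u '' Ioi 0) := by
  rintro ⟨β, hβ⟩
  have hθ : ∀ t ≥ 1, theta u t ^ 2 ≤ theta u 1 ^ 2 + β ^ 2 := by
    intro t ht
    have ht0 : t ∈ Ioi 0 := mem_Ioi.2 (one_pos.trans_le ht)
    have h1 : theta u 1 ≤ theta u t := hmono (mem_Ioi.2 one_pos) ht0 ht
    have h2 : theta u t ≤ β := hβ (mem_image_of_mem _ ht0)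
    rcases le_total 0 (theta u t) with h | h <;> nlinarith
  have hsinh : Tendsto (fun t => c * sinh t ^ 2) atTop atTop := by
    have : Tendsto sinh atTop atTop := tendsto_atTop_mono' atTop
      ((eventually_ge_atTop 0).mono fun t ht => self_le_sinh_iff.2 ht) tendsto_id
    exact ((tendsto_pow_atTop two_ne_zero).comp this).const_mul_atTop hc
  have hu0 : Tendsto u atTop (𝓝[>] 0) :=
    tendsto_nhdsWithin_iff.2 ⟨hlim, (eventually_gt_atTop 0).mono hpos⟩
  obtain ⟨t, ht1, htM, htF⟩ := ((eventually_ge_atTop 1).and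
    ((hsinh.eventually_gt_atTop (theta u 1 ^ 2 + β ^ 2)).and (hu0.eventually hFc))).exists
  have ht0 : t ∈ Ioi 0 := mem_Ioi.2 (one_pos.trans_le ht1)
  have hst := sinh_pos_iff.2 ht0
  have hut := hpos t ht0
  have hu' : deriv u t ^ 2 < c * u t ^ 2 := by
    refine lt_of_mul_lt_mul_right ?_ (sq_nonneg (sinh t))
    calc deriv u t ^ 2 * sinh t ^ 2 = theta u t ^ 2 * u t ^ 2 := by
          unfold theta
          field_simp
      _ ≤ (theta u 1 ^ 2 + β ^ 2) * u t ^ 2 := by gcongr; exact hθ t ht1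
      _ < c * sinh t ^ 2 * u t ^ 2 := by gcongr
      _ = c * u t ^ 2 * sinh t ^ 2 := by ring
  have huF : u t * F (u t) ≤ -c * u t ^ 2 := by
    nlinarith [mul_le_mul_of_nonneg_left htF hut.le]
  linarith [hE t ht0]

theorem existsUnique_sinh_mul_deriv_add_mul_eq_zero {u : ℝ → ℝ} {S : Set ℝ}
    (hS : IsPreconnected S) (hS0 : S ∈ 𝓝[>] 0) (hpos : ∀ τ ∈ S, 0 < u τ)
    (hθ : StrictMonoOn (theta u) S) (hθc : ContinuousOn (theta u) S)
    (hθ0 : Tendsto (theta u) (𝓝[>] 0) (𝓝 0)) (hunb : ¬ BddAbove (theta u '' S))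
    {β : ℝ} (hβ : 0 < β) : ∃! τ, τ ∈ S ∧ sinh τ * deriv u τ + β * u τ = 0 := by
  have hiff : ∀ τ ∈ S, sinh τ * deriv u τ + β * u τ = 0 ↔ theta u τ = β := fun τ hτ => by
    rw [theta, div_eq_iff (hpos τ hτ).ne']
    constructor <;> intro h <;> linarith
  obtain ⟨x, hxβ, hx⟩ := ((hθ0.eventually (eventually_lt_nhds hβ)).and hS0).exists
  obtain ⟨_, ⟨y, hy, rfl⟩, hyβ⟩ := not_bddAbove_iff.1 hunb β
  obtain ⟨τ, hτ, hτβ⟩ := hS.intermediate_value hx hy hθc ⟨hxβ.le, hyβ.le⟩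
  exact ⟨τ, ⟨hτ, (hiff τ hτ).2 hτβ⟩, fun σ ⟨hσ, hσβ⟩ =>
    hθ.injOn hσ hτ (((hiff σ hσ).1 hσβ).trans hτβ.symm)⟩

noncomputable def nonlinearity (m a b s : ℝ) : ℝ := a * s ^ (1 + 2 / m) - b * s

noncomputable def potential (m a b s : ℝ) : ℝ :=
  a * (m / (2 * m + 2)) * s ^ (2 + 2 / m) - b / 2 * s ^ 2

section Nonlinearity

variable {m a b : ℝ} (hm : 0 < m)
include hm

theorem hasDerivAt_potential (s : ℝ) :
    HasDerivAt (potential m a b) (nonlinearity m a b s) s := by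
  have hp : (1 : ℝ) ≤ 2 + 2 / m := by linarith [div_pos two_pos hm]
  refine (((hasDerivAt_rpow_const (Or.inr hp)).const_mul (a * (m / (2 * m + 2)))).sub
    ((hasDerivAt_pow 2 s).const_mul (b / 2))).congr_deriv ?_
  rw [nonlinearity, show 2 + 2 / m - 1 = 1 + 2 / m by ring]
  field_simp
  ring

theorem potential_zero : potential m a b 0 = 0 := by
  simp [potential, zero_rpow (by positivity : (2 : ℝ) + 2 / m ≠ 0)]

theorem two_mul_potential_lt (ha : 0 < a) {s : ℝ} (hs : 0 < s) :
    2 * potential m a b s < s * nonlinearity m a b s := by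
  have hsX : s ^ (2 + 2 / m) = s * s ^ (1 + 2 / m) := by
    rw [show (2 : ℝ) + 2 / m = 1 + (1 + 2 / m) by ring, rpow_add hs, rpow_one]
  have key : s * nonlinearity m a b s - 2 * potential m a b s =
      a / (m + 1) * s ^ (2 + 2 / m) := by
    rw [nonlinearity, potential, hsX]
    field_simp
    ring
  have : 0 < a / (m + 1) * s ^ (2 + 2 / m) := by positivity
  linarith

theorem eventually_nonlinearity_le (hb : 0 < b) :
    ∀ᶠ s in 𝓝[>] 0, nonlinearity m a b s ≤ -(b / 2) * s := by
  have hlim : Tendsto (fun s : ℝ => a * s ^ (2 / m)) (𝓝[>] 0) (𝓝 0) := by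
    have := ((continuousAt_rpow_const 0 (2 / m) (Or.inr (by positivity))).tendsto.const_mul
      a).mono_left (nhdsWithin_le_nhds (s := Ioi 0))
    simpa [zero_rpow (div_pos two_pos hm).ne'] using this
  filter_upwards [hlim.eventually (eventually_le_nhds (half_pos hb)), self_mem_nhdsWithin]
    with s hs (hs0 : 0 < s)
  rw [nonlinearity, rpow_add hs0, rpow_one]
  nlinarith

end Nonlinearity

end

/-- Monotonicity of the auxiliary function `θ` and uniqueness of the zero of the
comparison function (Lemma 5.8): for `α ∈ G ∪ N` with solution `u`, the function
`θ(τ) = −sinh(τ)·u'(τ)/u(τ)` is non-decreasing on `(0, b(α))`, and consequently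
for every `β > 0` the function `v_β(τ) = sinh(τ)·u'(τ) + β·u(τ)` has exactly one
zero in `(0, b(α))`.  The two conjuncts treat the cases `α ∈ N` (finite smallest
zero `b(α)`) and `α ∈ G` (`b(α) = ∞`). -/
theorem theta_monotone_and_unique_zero
    (m a b : ℝ) (hm : 2 < m) (ha : 0 < a) (hb : 0 < b)
    (F : ℝ → ℝ) (hF : ∀ s, F s = a * s ^ (1 + 2 / m) - b * s)
    (α : ℝ) (hα : 0 < α)
    (u : ℝ → ℝ)
    (huc : ContinuousOn u (Ici 0))
    (hud : ∀ τ ∈ Ioi (0 : ℝ), DifferentiableAt ℝ u τ)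
    (hud' : ∀ τ ∈ Ioi (0 : ℝ), DifferentiableAt ℝ (deriv u) τ)
    (hode : ∀ τ ∈ Ioi (0 : ℝ),
      deriv (deriv u) τ + (Real.cosh τ / Real.sinh τ) * deriv u τ + F (u τ) = 0)
    (hu0 : u 0 = α)
    (hu'0 : Tendsto (deriv u) (nhdsWithin 0 (Ioi 0)) (nhds 0)) :
    (∀ bα : ℝ, 0 < bα → u bα = 0 → (∀ τ ∈ Ico 0 bα, 0 < u τ) →
        MonotoneOn (fun τ => -(Real.sinh τ * deriv u τ) / u τ) (Ioo 0 bα) ∧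
        ∀ β > (0 : ℝ), ∃! τ, τ ∈ Ioo 0 bα ∧
          Real.sinh τ * deriv u τ + β * u τ = 0) ∧
    ((∀ τ ∈ Ioi (0 : ℝ), 0 < u τ) → Tendsto u atTop (nhds 0) →
        MonotoneOn (fun τ => -(Real.sinh τ * deriv u τ) / u τ) (Ioi 0) ∧
        ∀ β > (0 : ℝ), ∃! τ, τ ∈ Ioi (0 : ℝ) ∧
          Real.sinh τ * deriv u τ + β * u τ = 0) := by
  obtain rfl : F = nonlinearity m a b := funext hF
  have hm0 : 0 < m := by linarith
  have hsol : IsRadialSolution (nonlinearity m a b) u := ⟨hud, hud', hode⟩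
  have hG := hasDerivAt_potential (a := a) (b := b) hm0
  have hFG : ∀ s > 0, 2 * potential m a b s < s * nonlinearity m a b s :=
    fun _ hs => two_mul_potential_lt hm0 ha hs
  have hθ0 := tendsto_theta_nhdsGT_zero ((huc 0 self_mem_Ici).mono Ioi_subset_Ici_self)
    (hu0 ▸ hα.ne') hu'0
  refine ⟨fun bα hbα hub hpos => ?_, fun hpos hlim => ?_⟩
  · have hpos' : ∀ τ ∈ Ioo 0 bα, 0 < u τ := fun τ hτ => hpos τ (Ioo_subset_Ico_self hτ)
    have hθ := hsol.strictMonoOn_theta isOpen_Ioo (convex_Ioo 0 bα) Ioo_subset_Ioi_self hpos'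
      fun τ hτ => deriv_sq_add_mul_pos_of_energy_nonneg hFG (hpos' τ hτ)
        (hsol.energy_nonneg_of_eq_zero hG (potential_zero hm0) hbα hub τ hτ)
    exact ⟨hθ.monotoneOn, fun β hβ => existsUnique_sinh_mul_deriv_add_mul_eq_zero
      isPreconnected_Ioo (Ioo_mem_nhdsGT hbα) hpos' hθ
      (hsol.continuousOn_theta Ioo_subset_Ioi_self hpos') hθ0
      (not_bddAbove_theta_of_eq_zero hud hbα hub hpos') hβ⟩
  · have hE := fun τ hτ => deriv_sq_add_mul_pos_of_energy_nonneg hFG (hpos τ hτ)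
      (hsol.energy_nonneg_of_tendsto_zero hG (potential_zero hm0) hlim τ hτ)
    have hθ := hsol.strictMonoOn_theta isOpen_Ioi (convex_Ioi 0) subset_rfl hpos hE
    exact ⟨hθ.monotoneOn, fun β hβ => existsUnique_sinh_mul_deriv_add_mul_eq_zero
      isPreconnected_Ioi self_mem_nhdsWithin hpos hθ (hsol.continuousOn_theta subset_rfl hpos)
      hθ0 (not_bddAbove_theta_of_tendsto_zero (half_pos hb)
        (eventually_nonlinearity_le hm0 hb) hpos hlim hθ.monotoneOn hE) hβ⟩
end

section
/- Small initial values give solutions in P (Lemma 5.2): Let ξ₀ = ((m+1)·b̃/(m·ã))^{m/2}, the unique positive number with ∫₀^{ξ₀} f(s) ds = 0. If 0 < α ≤ ξ₀ and u is the solution of the initial value problem with u(0) = α, then u(τ) > 0 for all τ > 0 and u(τ) does not tend to 0 as τ → ∞; that is, α ∈ P. -/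
open Set Filter

/-- Small initial values give solutions in `P` (Lemma 5.2): with
`ξ₀ = ((m+1)·b̃/(m·ã))^{m/2}` (the unique positive number with
`∫₀^{ξ₀} f(s) ds = 0`), if `0 < α ≤ ξ₀` then the solution `u` of the initial
value problem stays positive and does not tend to `0` at infinity. -/
theorem small_initial_values_in_P
    (m a b : ℝ) (hm : 2 < m) (ha : 0 < a) (hb : 0 < b)
    (F : ℝ → ℝ) (hF : ∀ s, F s = a * s ^ (1 + 2 / m) - b * s)
    (ξ₀ : ℝ) (hξ₀ : ξ₀ = ((m + 1) * b / (m * a)) ^ (m / 2))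
    (α : ℝ) (hα : 0 < α) (hαξ : α ≤ ξ₀)
    (u : ℝ → ℝ)
    (huc : ContinuousOn u (Ici 0))
    (hud : ∀ τ ∈ Ioi (0 : ℝ), DifferentiableAt ℝ u τ)
    (hud' : ∀ τ ∈ Ioi (0 : ℝ), DifferentiableAt ℝ (deriv u) τ)
    (hode : ∀ τ ∈ Ioi (0 : ℝ),
      deriv (deriv u) τ + (Real.cosh τ / Real.sinh τ) * deriv u τ + F (u τ) = 0)
    (hu0 : u 0 = α)
    (hu'0 : Tendsto (deriv u) (nhdsWithin 0 (Ioi 0)) (nhds 0)) :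
    (∀ τ ∈ Ioi (0 : ℝ), 0 < u τ) ∧ ¬ Tendsto u atTop (nhds 0) := by
  have hm0 : (0:ℝ) < m := by linarith
  set p : ℝ := 2 + 2/m with hp
  have hp1 : (1:ℝ) ≤ p := by
    have : 0 < 2/m := by positivity
    simp only [hp]; linarith
  have hp0 : p ≠ 0 := by positivity
  set Φ : ℝ → ℝ := fun s : ℝ => a/p * s^p - b/2 * s^2 with hΦdef
  -- Φ has derivative F s everywhere
  have hΦ : ∀ s : ℝ, HasDerivAt Φ (F s) s := by
    intro s
    rw [hF]
    have h1 : HasDerivAt (fun s : ℝ => a/p * s^p) (a/p * (p * s^(p-1))) s :=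
      (Real.hasDerivAt_rpow_const (Or.inr hp1)).const_mul (a/p)
    have h2 : HasDerivAt (fun s : ℝ => b/2 * s^2) (b/2 * (2 * s^(2-1))) s := by
      simpa using ((hasDerivAt_pow 2 s).const_mul (b/2))
    have := h1.sub h2
    have e1 : p - 1 = 1 + 2/m := by rw [hp]; ring
    have e2 : a/p * (p * s^(p-1)) - b/2 * (2 * s^(2-1)) = a * s^(1+2/m) - b*s := by
      rw [e1]; field_simp; ring
    rwa [e2] at this
  have hΦ0 : Φ 0 = 0 := by
    simp [hΦdef, Real.zero_rpow hp0]
  -- Φ α ≤ 0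
  have hΦα : Φ α ≤ 0 := by
    have hc : (0:ℝ) < (m+1)*b/(m*a) := by positivity
    have hξpos : 0 < ξ₀ := by rw [hξ₀]; positivity
    have hcm : a/p * ((m+1)*b/(m*a)) = b/2 := by
      rw [hp]; field_simp
    have hαp : α ^ p = α^2 * α ^ (2/m) := by
      have : (p : ℝ) = 2 + 2/m := hp
      rw [this, Real.rpow_add hα, Real.rpow_two]
    have hle : α ^ (2/m) ≤ (m+1)*b/(m*a) := by
      have h1 : α ^ (2/m) ≤ ξ₀ ^ (2/m) :=
        Real.rpow_le_rpow hα.le hαξ (by positivity)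
      have h2 : ξ₀ ^ (2/m) = (m+1)*b/(m*a) := by
        rw [hξ₀, ← Real.rpow_mul hc.le, show m/2 * (2/m) = 1 by field_simp,
          Real.rpow_one]
      calc α ^ (2/m) ≤ ξ₀ ^ (2/m) := h1
        _ = _ := h2
    have : a/p * α^p ≤ b/2 * α^2 := by
      rw [hαp, ← hcm]
      have h3 : α^(2/m) * α^2 ≤ ((m+1)*b/(m*a)) * α^2 := by
        apply mul_le_mul_of_nonneg_right hle (by positivity)
      calc a/p * (α^2 * α^(2/m)) = a/p * (α^(2/m) * α^2) := by ring
        _ ≤ a/p * (((m+1)*b/(m*a)) * α^2) := by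
            apply mul_le_mul_of_nonneg_left h3 (by positivity)
        _ = a/p * ((m+1)*b/(m*a)) * α^2 := by ring
    simp only [hΦdef, sub_nonpos]
    linarith
  -- the energy
  set E : ℝ → ℝ := fun τ => (deriv u τ)^2/2 + Φ (u τ) with hEdef
  have hsinh : ∀ τ : ℝ, τ ∈ Ioi (0:ℝ) → 0 < Real.sinh τ := fun τ hτ =>
    Real.sinh_pos_iff.2 hτ
  -- derivative of E
  have hE : ∀ τ ∈ Ioi (0:ℝ),
      HasDerivAt E (-(Real.cosh τ / Real.sinh τ) * (deriv u τ)^2) τ := by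
    intro τ hτ
    have hu' : HasDerivAt u (deriv u τ) τ := (hud τ hτ).hasDerivAt
    have hu'' : HasDerivAt (deriv u) (deriv (deriv u) τ) τ := (hud' τ hτ).hasDerivAt
    have h1 : HasDerivAt (fun τ => (deriv u τ)^2/2)
        (deriv u τ * deriv (deriv u) τ) τ := by
      have := (hu''.pow 2).div_const 2
      simpa [mul_comm, mul_assoc, mul_div_assoc] using this
    have h2 : HasDerivAt (fun τ => Φ (u τ)) (F (u τ) * deriv u τ) τ :=
      (hΦ (u τ)).comp τ hu'
    have := h1.add h2
    have heq : deriv u τ * deriv (deriv u) τ + F (u τ) * deriv u τ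
        = -(Real.cosh τ / Real.sinh τ) * (deriv u τ)^2 := by
      have h := hode τ hτ
      have : deriv (deriv u) τ + F (u τ) = -(Real.cosh τ / Real.sinh τ) * deriv u τ := by
        linarith
      calc deriv u τ * deriv (deriv u) τ + F (u τ) * deriv u τ
          = deriv u τ * (deriv (deriv u) τ + F (u τ)) := by ring
        _ = deriv u τ * (-(Real.cosh τ / Real.sinh τ) * deriv u τ) := by rw [this]
        _ = -(Real.cosh τ / Real.sinh τ) * (deriv u τ)^2 := by ring
    rwa [heq] at this
  have hEdiff : ∀ τ ∈ Ioi (0:ℝ), DifferentiableAt ℝ E τ := fun τ hτ =>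
    (hE τ hτ).differentiableAt
  have hEderiv : ∀ τ ∈ Ioi (0:ℝ), deriv E τ ≤ 0 := by
    intro τ hτ
    rw [(hE τ hτ).deriv]
    have h1 : 0 < Real.cosh τ / Real.sinh τ :=
      div_pos (Real.cosh_pos τ) (hsinh τ hτ)
    nlinarith [sq_nonneg (deriv u τ)]
  -- E is antitone on Ioi 0
  have hEanti : AntitoneOn E (Ioi 0) := by
    apply antitoneOn_of_deriv_nonpos (convex_Ioi 0)
    · exact fun τ hτ => (hEdiff τ hτ).continuousAt.continuousWithinAt
    · rw [interior_Ioi]; exact fun τ hτ => (hEdiff τ hτ).differentiableWithinAt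
    · rw [interior_Ioi]; exact hEderiv
  -- limit of E at 0⁺
  have huα : Tendsto u (nhdsWithin 0 (Ioi 0)) (nhds α) := by
    have := (huc 0 (self_mem_Ici)).tendsto
    rw [hu0] at this
    exact this.mono_left (nhdsWithin_mono 0 Ioi_subset_Ici_self)
  have hE0 : Tendsto E (nhdsWithin 0 (Ioi 0)) (nhds (Φ α)) := by
    have h1 : Tendsto (fun τ => (deriv u τ)^2/2) (nhdsWithin 0 (Ioi 0)) (nhds 0) := by
      have := (hu'0.pow 2).div_const 2
      simpa using this
    have h2 : Tendsto (fun τ => Φ (u τ)) (nhdsWithin 0 (Ioi 0)) (nhds (Φ α)) :=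
      ((hΦ α).differentiableAt.continuousAt.tendsto).comp huα
    have := h1.add h2
    simpa using this
  -- E ≤ Φ α ≤ 0 on Ioi 0
  have hEle : ∀ τ ∈ Ioi (0:ℝ), E τ ≤ Φ α := by
    intro τ hτ
    refine ge_of_tendsto hE0 ?_
    filter_upwards [Ioo_mem_nhdsGT hτ, self_mem_nhdsWithin] with σ hσ hσ'
    exact hEanti hσ' hτ hσ.2.le
  -- if E vanishes on (0, T) then u is constant on [0, T]
  have hconst : ∀ T : ℝ, 0 < T → (∀ τ ∈ Ioo 0 T, E τ = 0) →
      u T = α := by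
    intro T hT hE0'
    have hder0 : ∀ τ ∈ Ioo (0:ℝ) T, deriv u τ = 0 := by
      intro τ hτ
      have hτ' : τ ∈ Ioi (0:ℝ) := hτ.1
      have hEc : HasDerivAt E 0 τ := by
        have hmem : Ioo (0:ℝ) T ∈ nhds τ := Ioo_mem_nhds hτ.1 hτ.2
        have : E =ᶠ[nhds τ] fun _ => 0 := by
          filter_upwards [hmem] with σ hσ using hE0' σ hσ
        exact (hasDerivAt_const τ (0:ℝ)).congr_of_eventuallyEq this
      have heq := hEc.unique (hE τ hτ')
      have h1 : 0 < Real.cosh τ / Real.sinh τ :=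
        div_pos (Real.cosh_pos τ) (hsinh τ hτ')
      have h2 : deriv u τ ^ 2 = 0 := by
        by_contra h3
        have h4 : 0 < deriv u τ ^ 2 := lt_of_le_of_ne (sq_nonneg _) (Ne.symm h3)
        nlinarith
      exact pow_eq_zero_iff (by norm_num) |>.1 h2
    have hucc : ContinuousOn u (Icc 0 T) := huc.mono (Icc_subset_Ici_self)
    have hintr : interior (Icc (0:ℝ) T) = Ioo 0 T := interior_Icc
    have hdiff : DifferentiableOn ℝ u (interior (Icc (0:ℝ) T)) := by
      rw [hintr]; exact fun τ hτ => (hud τ hτ.1).differentiableWithinAt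
    have hmono : MonotoneOn u (Icc 0 T) := by
      apply monotoneOn_of_deriv_nonneg (convex_Icc 0 T) hucc hdiff
      rw [hintr]; intro τ hτ; rw [hder0 τ hτ]
    have hanti : AntitoneOn u (Icc 0 T) := by
      apply antitoneOn_of_deriv_nonpos (convex_Icc 0 T) hucc hdiff
      rw [hintr]; intro τ hτ; rw [hder0 τ hτ]
    have h0m : (0:ℝ) ∈ Icc (0:ℝ) T := ⟨le_refl 0, hT.le⟩
    have hTm : T ∈ Icc (0:ℝ) T := ⟨hT.le, le_refl T⟩
    have := le_antisymm (hanti h0m hTm hT.le) (hmono h0m hTm hT.le)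
    rw [← hu0]; exact this
  -- Part 1: positivity
  have hpos : ∀ τ ∈ Ioi (0:ℝ), 0 < u τ := by
    by_contra hcon
    push_neg at hcon
    obtain ⟨τ₁, hτ₁, hτ₁le⟩ := hcon
    -- the set of points in [0, τ₁] where u ≤ 0
    set S : Set ℝ := {τ ∈ Icc 0 τ₁ | u τ ≤ 0} with hSdef
    have hSne : S.Nonempty := ⟨τ₁, ⟨le_of_lt hτ₁, le_refl τ₁⟩, hτ₁le⟩
    have hSbdd : BddBelow S := ⟨0, fun τ hτ => hτ.1.1⟩
    have hSclosed : IsClosed S := by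
      have : S = Icc 0 τ₁ ∩ u ⁻¹' (Iic 0) := by
        ext τ; simp [hSdef, and_comm]
      rw [this]
      exact (huc.mono (Icc_subset_Ici_self)).preimage_isClosed_of_isClosed
        isClosed_Icc isClosed_Iic
    set t₁ := sInf S with ht₁def
    have ht₁S : t₁ ∈ S := hSclosed.csInf_mem hSne hSbdd
    have ht₁Icc : t₁ ∈ Icc (0:ℝ) τ₁ := ht₁S.1
    have hut₁ : u t₁ ≤ 0 := ht₁S.2
    -- u > 0 strictly before t₁
    have hbefore : ∀ τ ∈ Ico (0:ℝ) t₁, 0 < u τ := by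
      intro τ hτ
      by_contra hle
      push_neg at hle
      have : τ ∈ S := ⟨⟨hτ.1, hτ.2.le.trans ht₁Icc.2⟩, hle⟩
      exact absurd (csInf_le hSbdd this) (not_le.2 hτ.2)
    have ht₁pos : 0 < t₁ := by
      rcases lt_or_eq_of_le ht₁Icc.1 with h | h
      · exact h
      · exfalso; rw [← h] at hut₁; rw [hu0] at hut₁; linarith
    -- u t₁ = 0 by continuity
    have hut₁0 : u t₁ = 0 := by
      refine le_antisymm hut₁ ?_
      have hcl : ContinuousWithinAt u (Ico 0 t₁) t₁ := by
        apply (huc t₁ (le_of_lt ht₁pos)).mono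
        exact Ico_subset_Ici_self
      have : Tendsto u (nhdsWithin t₁ (Ico 0 t₁)) (nhds (u t₁)) := hcl.tendsto
      haveI hne : (nhdsWithin t₁ (Ico 0 t₁)).NeBot := by
        apply IsLUB.nhdsWithin_neBot ?_ (nonempty_Ico.2 ht₁pos)
        exact isLUB_Ico ht₁pos
      refine ge_of_tendsto this ?_
      filter_upwards [self_mem_nhdsWithin] with σ hσ
      exact (hbefore σ hσ).le
    have ht₁Ioi : t₁ ∈ Ioi (0:ℝ) := ht₁pos
    have hEt₁ : 0 ≤ E t₁ := by
      simp only [hEdef]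
      rw [hut₁0, hΦ0]
      positivity
    have hEt₁0 : E t₁ = 0 := le_antisymm ((hEle t₁ ht₁Ioi).trans hΦα) hEt₁
    have hzero : ∀ τ ∈ Ioo (0:ℝ) t₁, E τ = 0 := by
      intro τ hτ
      have h1 : E τ ≤ 0 := (hEle τ hτ.1).trans hΦα
      have h2 : E t₁ ≤ E τ := hEanti hτ.1 ht₁Ioi hτ.2.le
      linarith
    have hfin := hconst t₁ ht₁pos hzero
    rw [hut₁0] at hfin
    linarith
  refine ⟨hpos, ?_⟩
  -- Part 2: no decay
  intro htend
  by_cases hneg : ∃ τ₀ ∈ Ioi (0:ℝ), E τ₀ < 0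
  · obtain ⟨τ₀, hτ₀, hEτ₀⟩ := hneg
    -- eventually Φ (u τ) > E τ₀ but Φ (u τ) ≤ E τ ≤ E τ₀
    have hΦu : Tendsto (fun τ => Φ (u τ)) atTop (nhds 0) := by
      have := ((hΦ 0).differentiableAt.continuousAt.tendsto).comp htend
      rwa [hΦ0] at this
    have hev : ∀ᶠ τ in atTop, E τ₀ < Φ (u τ) :=
      hΦu.eventually (eventually_gt_nhds hEτ₀)
    have hev2 : ∀ᶠ τ in atTop, Φ (u τ) ≤ E τ₀ := by
      filter_upwards [eventually_ge_atTop (max τ₀ 1)] with τ hτ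
      have hτ0 : τ₀ ≤ τ := le_trans (le_max_left _ _) hτ
      have hτpos : (0:ℝ) < τ := lt_of_lt_of_le hτ₀ hτ0
      have h1 : E τ ≤ E τ₀ := hEanti hτ₀ hτpos hτ0
      have h2 : Φ (u τ) ≤ E τ := by
        simp only [hEdef]; nlinarith [sq_nonneg (deriv u τ)]
      linarith
    obtain ⟨τ, h1, h2⟩ := (hev.and hev2).exists
    linarith
  · push_neg at hneg
    -- E ≡ 0, so u is constant, contradiction with u 1 > 0 and u → 0
    have hE00 : ∀ τ ∈ Ioi (0:ℝ), E τ = 0 := by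
      intro τ hτ
      refine le_antisymm ((hEle τ hτ).trans hΦα) (hneg τ hτ)
    have hcst : ∀ T : ℝ, 1 < T → u T = α := by
      intro T hT
      exact hconst T (by linarith) (fun τ hτ => hE00 τ hτ.1)
    have htα : Tendsto u atTop (nhds α) := by
      refine tendsto_const_nhds.congr' ?_
      filter_upwards [eventually_gt_atTop (1:ℝ)] with T hT
      exact (hcst T hT).symm
    have : α = 0 := tendsto_nhds_unique htα htend
    linarith
end
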